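/- arXiv:2211.07264 — 4 statements merged into one kernel-verified Lean document; each statement's English description precedes it below -/
import Mathlib

section
/- Let Y0, Y1 be binary random variables, X another random variable, and define S0(x) = P(Y0 = 1 | X = x), S1(x) = P(Y1 = 1 | X = x), β = P(Y0 = 1, Y1 = 0). Then E[max{0, S0(X) - S1(X)}] ≤ β ≤ E[min{S0(X), 1 - S1(X)}]. -/
open MeasureTheory

theorem uplift_bounds_beta (Ω E : Type*) [MeasurableSpace Ω] [mE : MeasurableSpace E]
    (P : Measure Ω) [IsProbabilityMeasure P]
    (Y0 Y1 : Ω → ℕ) (X : Ω → E)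
    (hY0 : Measurable Y0) (hY1 : Measurable Y1) (hX : Measurable X)
    (hb0 : ∀ ω, Y0 ω = 0 ∨ Y0 ω = 1) (hb1 : ∀ ω, Y1 ω = 0 ∨ Y1 ω = 1)
    (S0 S1 : Ω → ℝ)
    (hS0 : S0 =ᵐ[P] P[Set.indicator {ω | Y0 ω = 1} (fun _ => (1 : ℝ)) |
      MeasurableSpace.comap X mE])
    (hS1 : S1 =ᵐ[P] P[Set.indicator {ω | Y1 ω = 1} (fun _ => (1 : ℝ)) |
      MeasurableSpace.comap X mE]) :
    (∫ ω, max 0 (S0 ω - S1 ω) ∂P) ≤ (P {ω | Y0 ω = 1 ∧ Y1 ω = 0}).toReal ∧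
      (P {ω | Y0 ω = 1 ∧ Y1 ω = 0}).toReal ≤ ∫ ω, min (S0 ω) (1 - S1 ω) ∂P := by
  have hm : MeasurableSpace.comap X mE ≤ _ := hX.comap_le
  set f0 : Ω → ℝ := Set.indicator {ω | Y0 ω = 1} (fun _ => (1 : ℝ)) with hf0_def
  set f1 : Ω → ℝ := Set.indicator {ω | Y1 ω = 1} (fun _ => (1 : ℝ)) with hf1_def
  set g : Ω → ℝ := Set.indicator {ω | Y0 ω = 1 ∧ Y1 ω = 0} (fun _ => (1 : ℝ)) with hg_def
  have hA : MeasurableSet {ω | Y0 ω = 1} := hY0 (measurableSet_singleton 1)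
  have hB : MeasurableSet {ω | Y1 ω = 1} := hY1 (measurableSet_singleton 1)
  have hC : MeasurableSet {ω | Y0 ω = 1 ∧ Y1 ω = 0} := by
    have : {ω | Y0 ω = 1 ∧ Y1 ω = 0} = {ω | Y0 ω = 1} ∩ {ω | Y1 ω = 0} := rfl
    rw [this]
    exact hA.inter (hY1 (measurableSet_singleton 0))
  have hif0 : Integrable f0 P := (integrable_const (1 : ℝ)).indicator hA
  have hif1 : Integrable f1 P := (integrable_const (1 : ℝ)).indicator hB
  have hig : Integrable g P := (integrable_const (1 : ℝ)).indicator hC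
  -- pointwise facts
  have hg01 : ∀ ω, g ω = 0 ∨ g ω = 1 := by
    intro ω
    by_cases h : Y0 ω = 1 ∧ Y1 ω = 0
    · right; simp [hg_def, Set.indicator_of_mem, h]
    · left; simp [hg_def, Set.indicator_of_notMem, h]
  have hgnn : ∀ ω, 0 ≤ g ω := by
    intro ω; rcases hg01 ω with h | h <;> rw [h] <;> norm_num
  have hgle0 : ∀ ω, g ω ≤ f0 ω := by
    intro ω
    by_cases h : Y0 ω = 1 ∧ Y1 ω = 0
    · simp [hg_def, hf0_def, Set.indicator_of_mem, h, h.1, Set.mem_setOf_eq]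
    · have : g ω = 0 := by simp [hg_def, Set.indicator_of_notMem, h]
      rw [this]
      by_cases h0 : Y0 ω = 1 <;> simp [hf0_def, Set.indicator, h0, Set.mem_setOf_eq]
  have hgle1 : ∀ ω, g ω ≤ 1 - f1 ω := by
    intro ω
    by_cases h1 : Y1 ω = 1
    · have hg0 : g ω = 0 := by
        simp only [hg_def, Set.indicator_apply, Set.mem_setOf_eq]
        rw [if_neg]; rintro ⟨_, h0⟩; rw [h1] at h0; exact one_ne_zero h0
      have : f1 ω = 1 := by simp [hf1_def, Set.indicator_of_mem, h1, Set.mem_setOf_eq]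
      rw [hg0, this]; norm_num
    · have : f1 ω = 0 := by simp [hf1_def, Set.indicator, h1, Set.mem_setOf_eq]
      rw [this]
      rcases hg01 ω with h | h <;> rw [h] <;> norm_num
  have hsub : ∀ ω, f0 ω - f1 ω ≤ g ω := by
    intro ω
    by_cases h1 : Y1 ω = 1
    · have : f1 ω = 1 := by simp [hf1_def, Set.indicator_of_mem, h1, Set.mem_setOf_eq]
      rw [this]
      have hf0le : f0 ω ≤ 1 := by
        by_cases h0 : Y0 ω = 1 <;> simp [hf0_def, Set.indicator, h0, Set.mem_setOf_eq]
      linarith [hgnn ω]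
    · have h1' : Y1 ω = 0 := (hb1 ω).resolve_right h1
      have hf1 : f1 ω = 0 := by simp [hf1_def, Set.indicator, h1, Set.mem_setOf_eq]
      rw [hf1, sub_zero]
      by_cases h0 : Y0 ω = 1
      · have : g ω = 1 := by
          simp [hg_def, Set.indicator_of_mem, Set.mem_setOf_eq, h0, h1']
        rw [this]
        simp [hf0_def, Set.indicator, h0, Set.mem_setOf_eq]
      · have : f0 ω = 0 := by simp [hf0_def, Set.indicator, h0, Set.mem_setOf_eq]
        rw [this]; exact hgnn ω
  -- β = ∫ g
  have hbeta : (P {ω | Y0 ω = 1 ∧ Y1 ω = 0}).toReal = ∫ ω, g ω ∂P := by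
    rw [hg_def]
    exact (integral_indicator_one hC).symm
  -- ∫ g = ∫ condexp g
  have hcg : ∫ ω, (P[g|MeasurableSpace.comap X mE]) ω ∂P = ∫ ω, g ω ∂P := integral_condExp hm
  -- condexp comparisons
  have h1 : (P[g|MeasurableSpace.comap X mE]) ≤ᵐ[P] fun ω => min (S0 ω) (1 - S1 ω) := by
    have hle0 : (P[g|MeasurableSpace.comap X mE]) ≤ᵐ[P] (P[f0|MeasurableSpace.comap X mE]) :=
      condExp_mono hig hif0 (Filter.Eventually.of_forall hgle0)
    have hle1 : (P[g|MeasurableSpace.comap X mE]) ≤ᵐ[P] (P[(fun ω => 1 - f1 ω)|MeasurableSpace.comap X mE]) :=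
      condExp_mono hig ((integrable_const (1 : ℝ)).sub hif1)
        (Filter.Eventually.of_forall hgle1)
    have hcsub : (P[(fun ω => 1 - f1 ω)|MeasurableSpace.comap X mE]) =ᵐ[P] fun ω => 1 - (P[f1|MeasurableSpace.comap X mE]) ω := by
      have := condExp_sub (m := MeasurableSpace.comap X mE) (μ := P) (integrable_const (1 : ℝ)) hif1
      filter_upwards [this, Filter.Eventually.of_forall (fun ω => congrFun (condExp_const hm (1 : ℝ) (μ := P)) ω)] with ω h h'
      simp only [Pi.sub_apply] at h
      rw [show (fun ω => 1 - f1 ω) = (fun _ => (1:ℝ)) - f1 from rfl, h, h']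
    filter_upwards [hle0, hle1, hcsub, hS0, hS1] with ω h0 h1 hcs hs0 hs1
    rw [le_min_iff]
    constructor
    · rw [hs0]; exact h0
    · rw [hs1]; calc (P[g|MeasurableSpace.comap X mE]) ω ≤ _ := h1
        _ = _ := hcs
  have h2 : (fun ω => max 0 (S0 ω - S1 ω)) ≤ᵐ[P] (P[g|MeasurableSpace.comap X mE]) := by
    have hnn : 0 ≤ᵐ[P] (P[g|MeasurableSpace.comap X mE]) :=
      condExp_nonneg (Filter.Eventually.of_forall hgnn)
    have hle : (P[(fun ω => f0 ω - f1 ω)|MeasurableSpace.comap X mE]) ≤ᵐ[P] (P[g|MeasurableSpace.comap X mE]) :=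
      condExp_mono (hif0.sub hif1) hig (Filter.Eventually.of_forall hsub)
    have hcsub : (P[(fun ω => f0 ω - f1 ω)|MeasurableSpace.comap X mE]) =ᵐ[P]
        fun ω => (P[f0|MeasurableSpace.comap X mE]) ω - (P[f1|MeasurableSpace.comap X mE]) ω := by
      have := condExp_sub (m := MeasurableSpace.comap X mE) (μ := P) hif0 hif1
      filter_upwards [this] with ω h
      exact h
    filter_upwards [hnn, hle, hcsub, hS0, hS1] with ω h0 h1 hcs hs0 hs1
    rw [max_le_iff]
    refine ⟨h0, ?_⟩
    rw [hs0, hs1, ← hcs]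
    exact h1
  -- integrability of the outer functions
  have hiS0 : Integrable S0 P := (integrable_condExp).congr hS0.symm
  have hiS1 : Integrable S1 P := (integrable_condExp).congr hS1.symm
  have himax : Integrable (fun ω => max 0 (S0 ω - S1 ω)) P :=
    (integrable_const (0 : ℝ)).sup (hiS0.sub hiS1)
  have himin : Integrable (fun ω => min (S0 ω) (1 - S1 ω)) P :=
    hiS0.inf ((integrable_const (1 : ℝ)).sub hiS1)
  constructor
  · calc ∫ ω, max 0 (S0 ω - S1 ω) ∂P ≤ ∫ ω, (P[g|MeasurableSpace.comap X mE]) ω ∂P :=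
          integral_mono_ae himax integrable_condExp h2
      _ = ∫ ω, g ω ∂P := hcg
      _ = _ := hbeta.symm
  · calc (P {ω | Y0 ω = 1 ∧ Y1 ω = 0}).toReal = ∫ ω, g ω ∂P := hbeta
      _ = ∫ ω, (P[g|MeasurableSpace.comap X mE]) ω ∂P := hcg.symm
      _ ≤ ∫ ω, min (S0 ω) (1 - S1 ω) ∂P := integral_mono_ae integrable_condExp himin h1
end

section
/- Let Y0, Y1 be binary random variables, X a random variable, δ = P(Y0 = 1, Y1 = 1), and S_t(X) = P(Y_t = 1 | X) for t ∈ {0,1}. Then E[max{0, S0(X) + S1(X) - 1}] ≤ δ ≤ E[min{S0(X), S1(X)}]. -/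
open MeasureTheory

theorem uplift_bounds_delta (Ω E : Type*) [MeasurableSpace Ω] [mE : MeasurableSpace E]
    (P : Measure Ω) [IsProbabilityMeasure P]
    (Y0 Y1 : Ω → ℕ) (X : Ω → E)
    (hY0 : Measurable Y0) (hY1 : Measurable Y1) (hX : Measurable X)
    (hb0 : ∀ ω, Y0 ω = 0 ∨ Y0 ω = 1) (hb1 : ∀ ω, Y1 ω = 0 ∨ Y1 ω = 1)
    (S0 S1 : Ω → ℝ)
    (hS0 : S0 =ᵐ[P] P[Set.indicator {ω | Y0 ω = 1} (fun _ => (1 : ℝ)) |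
      MeasurableSpace.comap X mE])
    (hS1 : S1 =ᵐ[P] P[Set.indicator {ω | Y1 ω = 1} (fun _ => (1 : ℝ)) |
      MeasurableSpace.comap X mE]) :
    (∫ ω, max 0 (S0 ω + S1 ω - 1) ∂P) ≤ (P {ω | Y0 ω = 1 ∧ Y1 ω = 1}).toReal ∧
      (P {ω | Y0 ω = 1 ∧ Y1 ω = 1}).toReal ≤ ∫ ω, min (S0 ω) (S1 ω) ∂P := by
  have hm : MeasurableSpace.comap X mE ≤ ‹MeasurableSpace Ω› := hX.comap_le
  set A : Set Ω := {ω | Y0 ω = 1} with hAdef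
  set B : Set Ω := {ω | Y1 ω = 1} with hBdef
  have hA : MeasurableSet A := hY0 (measurableSet_singleton 1)
  have hB : MeasurableSet B := hY1 (measurableSet_singleton 1)
  have hAB : MeasurableSet (A ∩ B) := hA.inter hB
  have hABset : {ω | Y0 ω = 1 ∧ Y1 ω = 1} = A ∩ B := rfl
  have hiA : Integrable (A.indicator fun _ => (1 : ℝ)) P :=
    (integrable_const (1 : ℝ)).indicator hA
  have hiB : Integrable (B.indicator fun _ => (1 : ℝ)) P :=
    (integrable_const (1 : ℝ)).indicator hB
  have hiAB : Integrable ((A ∩ B).indicator fun _ => (1 : ℝ)) P :=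
    (integrable_const (1 : ℝ)).indicator hAB
  set f := P[A.indicator fun _ => (1 : ℝ) | MeasurableSpace.comap X mE] with hf
  set g := P[B.indicator fun _ => (1 : ℝ) | MeasurableSpace.comap X mE] with hg
  set h := P[(A ∩ B).indicator fun _ => (1 : ℝ) | MeasurableSpace.comap X mE] with hh
  -- ∫ h = P (A ∩ B)
  have hint : ∫ ω, h ω ∂P = (P (A ∩ B)).toReal := by
    rw [hh, integral_condExp hm]
    exact integral_indicator_one (μ := P) hAB
  -- 0 ≤ h a.e.
  have h0 : 0 ≤ᵐ[P] h := condExp_nonneg (Filter.Eventually.of_forall fun ω => by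
    by_cases hω : ω ∈ A ∩ B <;> simp [Set.indicator_apply, hω])
  -- h ≤ f, h ≤ g a.e.
  have hhf : h ≤ᵐ[P] f := condExp_mono hiAB hiA (Filter.Eventually.of_forall fun ω => by
    by_cases h1 : ω ∈ A <;> by_cases h2 : ω ∈ B <;>
      simp [Set.indicator_apply, Set.mem_inter_iff, h1, h2])
  have hhg : h ≤ᵐ[P] g := condExp_mono hiAB hiB (Filter.Eventually.of_forall fun ω => by
    by_cases h1 : ω ∈ A <;> by_cases h2 : ω ∈ B <;>
      simp [Set.indicator_apply, Set.mem_inter_iff, h1, h2])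
  -- f + g - 1 ≤ h a.e.
  have hsum : ∀ᵐ ω ∂P, f ω + g ω - 1 ≤ h ω := by
    have hmono : (fun ω => A.indicator (fun _ => (1 : ℝ)) ω + B.indicator (fun _ => (1 : ℝ)) ω
        - 1) ≤ᵐ[P] ((A ∩ B).indicator fun _ => (1 : ℝ)) :=
      Filter.Eventually.of_forall fun ω => by
        by_cases h1 : ω ∈ A <;> by_cases h2 : ω ∈ B <;>
          simp [Set.indicator_apply, Set.mem_inter_iff, h1, h2]
    have hc := condExp_mono (μ := P) (m := MeasurableSpace.comap X mE)
      ((hiA.add hiB).sub (integrable_const 1)) hiAB hmono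
    have he : P[((A.indicator fun _ => (1 : ℝ)) + B.indicator fun _ => (1 : ℝ))
        - fun _ => (1 : ℝ) | MeasurableSpace.comap X mE] =ᵐ[P] fun ω => f ω + g ω - 1 := by
      have h1 := condExp_sub (μ := P) (m := MeasurableSpace.comap X mE)
        (hiA.add hiB) (integrable_const (1 : ℝ))
      have h2 := condExp_add (μ := P) (m := MeasurableSpace.comap X mE) hiA hiB
      have h3 : P[(fun _ : Ω => (1 : ℝ)) | MeasurableSpace.comap X mE] =ᵐ[P]
          fun _ => (1 : ℝ) := by rw [condExp_const hm]
      filter_upwards [h1, h2, h3] with ω e1 e2 e3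
      simp only [Pi.sub_apply, Pi.add_apply] at e1 e2 e3 ⊢
      rw [e1, e2, e3]
    filter_upwards [hc, he] with ω e1 e2
    rw [← e2]; exact e1
  -- integrability
  have hif : Integrable f P := integrable_condExp
  have hig : Integrable g P := integrable_condExp
  have hih : Integrable h P := integrable_condExp
  have hiMax : Integrable (fun ω => max 0 (S0 ω + S1 ω - 1)) P := by
    refine ((integrable_const (0 : ℝ)).sup ((hif.add hig).sub (integrable_const 1))).congr ?_
    filter_upwards [hS0, hS1] with ω e0 e1
    simp [Pi.sup_apply, e0, e1, max_def]
  have hiMin : Integrable (fun ω => min (S0 ω) (S1 ω)) P := by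
    refine (hif.inf hig).congr ?_
    filter_upwards [hS0, hS1] with ω e0 e1
    simp [Pi.inf_apply, e0, e1]
  constructor
  · rw [hABset, ← hint]
    refine integral_mono_ae hiMax hih ?_
    filter_upwards [hS0, hS1, h0, hsum] with ω e0 e1 e2 e3
    exact max_le e2 (by rw [e0, e1]; exact e3)
  · rw [hABset, ← hint]
    refine integral_mono_ae hih hiMin ?_
    filter_upwards [hS0, hS1, hhf, hhg] with ω e0 e1 e2 e3
    exact le_min (by rw [e0]; exact e2) (by rw [e1]; exact e3)
end

section
/- Let S0(X), S1(X) be [0,1]-valued random variables. Then the span of the uplift bounds, E[min{S0(X), 1 - S1(X)}] - E[max{0, S0(X) - S1(X)}], equals E[min{S0(X), S1(X), 1 - S0(X), 1 - S1(X)}]. -/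
open MeasureTheory

/-- Splitting on `a ≤ b`, both sides become `min a (c - b)` or `min b (c - a)`. -/
theorem min_sub_max_zero_sub_eq {α : Type*} [AddCommGroup α] [LinearOrder α]
    [IsOrderedAddMonoid α] (a b c : α) :
    min a (c - b) - max 0 (a - b) = min (min a b) (min (c - a) (c - b)) := by
  rcases le_total a b with hab | hba
  · rw [max_eq_left (sub_nonpos.2 hab), min_eq_left hab,
      min_eq_right (sub_le_sub_left hab c), sub_zero]
  · rw [max_eq_right (sub_nonneg.2 hba), min_eq_right hba,
      min_eq_left (sub_le_sub_left hba c), ← min_sub_sub_right, sub_sub_cancel,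
      sub_sub_sub_cancel_right]

theorem uplift_bounds_span (Ω : Type*) [MeasurableSpace Ω] (P : Measure Ω)
    [IsProbabilityMeasure P] (S0 S1 : Ω → ℝ)
    (hm0 : Measurable S0) (hm1 : Measurable S1)
    (h0 : ∀ ω, S0 ω ∈ Set.Icc (0 : ℝ) 1) (h1 : ∀ ω, S1 ω ∈ Set.Icc (0 : ℝ) 1) :
    (∫ ω, min (S0 ω) (1 - S1 ω) ∂P) - ∫ ω, max 0 (S0 ω - S1 ω) ∂P =
      ∫ ω, min (min (S0 ω) (S1 ω)) (min (1 - S0 ω) (1 - S1 ω)) ∂P := by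
  have hS0 : Integrable S0 P := .of_mem_Icc 0 1 hm0.aemeasurable (.of_forall h0)
  have hS1 : Integrable S1 P := .of_mem_Icc 0 1 hm1.aemeasurable (.of_forall h1)
  have hmin : Integrable (fun ω ↦ min (S0 ω) (1 - S1 ω)) P :=
    hS0.inf ((integrable_const 1).sub hS1)
  have hmax : Integrable (fun ω ↦ max 0 (S0 ω - S1 ω)) P :=
    (integrable_const 0).sup (hS0.sub hS1)
  rw [← integral_sub hmin hmax]
  simp_rw [min_sub_max_zero_sub_eq]
end

section
/- Let Y0, Y1 be binary random variables and X a random variable taking values in a finite set. If the conditional entropy H(Y0, Y1 | X) = 0, then for each pair (y0, y1) ∈ {0,1}², the uplift bounds on P(Y0 = y0, Y1 = y1) coincide, i.e., E[max{0, S0(X) - S1(X)}] = P(Y0 = 1, Y1 = 0) = E[min{S0(X), 1 - S1(X)}] (and analogously for the other three joint probabilities), where S_t(X) = P(Y_t = 1 | X). -/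
open MeasureTheory

/-- Conditional Shannon entropy `H(Y0, Y1 | X)` for binary `Y0, Y1` and a
finitely-valued covariate `X`, written via joint probabilities:
`H(Y0,Y1|X) = -∑_x ∑_{y0,y1} P(X=x, Y0=y0, Y1=y1) log (P(X=x,Y0=y0,Y1=y1) / P(X=x))`. -/
noncomputable def condEntropyBin {Ω E : Type*} [MeasurableSpace Ω] [Fintype E]
    (P : Measure Ω) (Y0 Y1 : Ω → ℕ) (X : Ω → E) : ℝ :=
  -∑ x : E, ∑ y0 ∈ ({0, 1} : Finset ℕ), ∑ y1 ∈ ({0, 1} : Finset ℕ),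
    (P ({ω | X ω = x} ∩ {ω | Y0 ω = y0} ∩ {ω | Y1 ω = y1})).toReal *
      Real.log ((P ({ω | X ω = x} ∩ {ω | Y0 ω = y0} ∩ {ω | Y1 ω = y1})).toReal /
        (P {ω | X ω = x}).toReal)

/-- Arithmetic core: if each of the four cell masses is `0` or `q` and they add up
to `q > 0`, then the lower and upper Fréchet bounds both equal the cell mass. -/
lemma cell_arith (q c00 c01 c10 c11 c : ℝ) (hq : 0 < q)
    (n00 : 0 ≤ c00) (n01 : 0 ≤ c01) (n10 : 0 ≤ c10) (n11 : 0 ≤ c11)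
    (h00 : c00 = 0 ∨ c00 = q) (h01 : c01 = 0 ∨ c01 = q)
    (h10 : c10 = 0 ∨ c10 = q) (h11 : c11 = 0 ∨ c11 = q)
    (hsum : c00 + c01 + c10 + c11 = q)
    (a b : ℕ) (ha : a = 0 ∨ a = 1) (hb : b = 0 ∨ b = 1)
    (hc : c = if a = 1 then (if b = 1 then c11 else c10)
              else (if b = 1 then c01 else c00)) :
    q * max 0 ((if a = 1 then (c10 + c11)/q else 1 - (c10 + c11)/q) +
        (if b = 1 then (c01 + c11)/q else 1 - (c01 + c11)/q) - 1) = c ∧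
    q * min (if a = 1 then (c10 + c11)/q else 1 - (c10 + c11)/q)
        (if b = 1 then (c01 + c11)/q else 1 - (c01 + c11)/q) = c := by
  have hq' : q ≠ 0 := hq.ne'
  have key : (c00 = q ∧ c01 = 0 ∧ c10 = 0 ∧ c11 = 0) ∨
      (c00 = 0 ∧ c01 = q ∧ c10 = 0 ∧ c11 = 0) ∨
      (c00 = 0 ∧ c01 = 0 ∧ c10 = q ∧ c11 = 0) ∨
      (c00 = 0 ∧ c01 = 0 ∧ c10 = 0 ∧ c11 = q) := by
    rcases h00 with h00 | h00
    · rcases h01 with h01 | h01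
      · rcases h10 with h10 | h10
        · rcases h11 with h11 | h11
          · exfalso; linarith
          · exact Or.inr (Or.inr (Or.inr ⟨h00, h01, h10, h11⟩))
        · exact Or.inr (Or.inr (Or.inl ⟨h00, h01, h10, by linarith⟩))
      · exact Or.inr (Or.inl ⟨h00, h01, by linarith, by linarith⟩)
    · exact Or.inl ⟨h00, by linarith, by linarith, by linarith⟩
  rcases key with ⟨e00,e01,e10,e11⟩|⟨e00,e01,e10,e11⟩|⟨e00,e01,e10,e11⟩|⟨e00,e01,e10,e11⟩ <;>
    rcases ha with ha|ha <;> rcases hb with hb|hb <;> subst ha <;> subst hb <;>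
    rw [hc] <;> norm_num [e00, e01, e10, e11, div_self hq']

/-- Splitting a set along a binary random variable. -/
lemma binary_split {Ω : Type*} [MeasurableSpace Ω] (P : Measure Ω) (Y : Ω → ℕ)
    (hb : ∀ ω, Y ω = 0 ∨ Y ω = 1) (hY : Measurable Y) (S : Set Ω)
    (hS : MeasurableSet S) :
    P (S ∩ {ω | Y ω = 0}) + P (S ∩ {ω | Y ω = 1}) = P S := by
  rw [← measure_union]
  · congr 1
    ext ω
    simp only [Set.mem_union, Set.mem_inter_iff, Set.mem_setOf_eq]
    rcases hb ω with h | h <;> simp [h]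
  · rw [Set.disjoint_left]
    rintro ω ⟨-, h0⟩ ⟨-, h1⟩
    simp only [Set.mem_setOf_eq] at h0 h1
    omega
  · exact hS.inter (hY (measurableSet_singleton 1))

/-- Splitting a set along a finitely-valued random variable. -/
lemma fintype_split {Ω E : Type*} [MeasurableSpace Ω] [MeasurableSpace E]
    [MeasurableSingletonClass E] [Fintype E] (P : Measure Ω) (X : Ω → E)
    (hX : Measurable X) (S : Set Ω) (hS : MeasurableSet S) :
    ∑ x : E, P (S ∩ {ω | X ω = x}) = P S := by
  have hdisj : ((Finset.univ : Finset E) : Set E).PairwiseDisjoint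
      (fun x : E => S ∩ {ω | X ω = x}) := by
    intro a _ b _ hab
    rw [Function.onFun, Set.disjoint_left]
    rintro ω ⟨-, h0⟩ ⟨-, h1⟩
    simp only [Set.mem_setOf_eq] at h0 h1
    exact hab (h0 ▸ h1 ▸ rfl)
  have hmeas : ∀ x ∈ (Finset.univ : Finset E),
      MeasurableSet (S ∩ {ω | X ω = x}) := fun x _ =>
    hS.inter (hX (measurableSet_singleton x))
  rw [← measure_biUnion_finset hdisj hmeas]
  congr 1
  ext ω
  simp

/-- Integral of a function of a finitely-valued random variable. -/
lemma integral_comp_fin {Ω E : Type*} [MeasurableSpace Ω] [MeasurableSpace E]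
    [MeasurableSingletonClass E] [Fintype E] (P : Measure Ω) [IsFiniteMeasure P]
    (X : Ω → E) (hX : Measurable X) (F : E → ℝ) :
    ∫ ω, F (X ω) ∂P = ∑ x : E, (P {ω | X ω = x}).toReal * F x := by
  have h1 : (fun ω => F (X ω)) =
      fun ω => ∑ x : E, Set.indicator {ω' | X ω' = x} (fun _ => F x) ω := by
    funext ω
    rw [Finset.sum_eq_single (X ω)]
    · rw [Set.indicator_of_mem (by simp : ω ∈ {ω' | X ω' = X ω})]
    · intro b _ hb
      exact Set.indicator_of_notMem (fun h => hb ((Set.mem_setOf_eq ▸ h).symm)) _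
    · intro h; exact absurd (Finset.mem_univ _) h
  have h2 : ∀ x : E,
      Integrable (fun ω => Set.indicator {ω' | X ω' = x} (fun _ => F x) ω) P :=
    fun x => (integrable_const (F x)).indicator (hX (measurableSet_singleton x))
  rw [h1, integral_finset_sum _ (fun x _ => h2 x)]
  refine Finset.sum_congr rfl fun x _ => ?_
  have hm : MeasurableSet {ω' | X ω' = x} := hX (measurableSet_singleton x)
  rw [integral_indicator_const _ hm, smul_eq_mul]
  rfl

theorem zero_cond_entropy_bounds_collapse (Ω E : Type*) [MeasurableSpace Ω]
    [mE : MeasurableSpace E] [MeasurableSingletonClass E] [Fintype E]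
    (P : Measure Ω) [IsProbabilityMeasure P]
    (Y0 Y1 : Ω → ℕ) (X : Ω → E)
    (hY0 : Measurable Y0) (hY1 : Measurable Y1) (hX : Measurable X)
    (hb0 : ∀ ω, Y0 ω = 0 ∨ Y0 ω = 1) (hb1 : ∀ ω, Y1 ω = 0 ∨ Y1 ω = 1)
    (hH : condEntropyBin P Y0 Y1 X = 0) :
    -- `S t ω` is the conditional probability `P(Y_t = 1 | X = X ω)`
    let S0 : Ω → ℝ := fun ω =>
      (P ({ω' | Y0 ω' = 1} ∩ {ω' | X ω' = X ω})).toReal / (P {ω' | X ω' = X ω}).toReal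
    let S1 : Ω → ℝ := fun ω =>
      (P ({ω' | Y1 ω' = 1} ∩ {ω' | X ω' = X ω})).toReal / (P {ω' | X ω' = X ω}).toReal
    ∀ y0 ∈ ({0, 1} : Finset ℕ), ∀ y1 ∈ ({0, 1} : Finset ℕ),
      let g0 : Ω → ℝ := fun ω => if y0 = 1 then S0 ω else 1 - S0 ω
      let g1 : Ω → ℝ := fun ω => if y1 = 1 then S1 ω else 1 - S1 ω
      (∫ ω, max 0 (g0 ω + g1 ω - 1) ∂P) = (P {ω | Y0 ω = y0 ∧ Y1 ω = y1}).toReal ∧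
        (P {ω | Y0 ω = y0 ∧ Y1 ω = y1}).toReal = ∫ ω, min (g0 ω) (g1 ω) ∂P := by
  intro S0 S1 y0 hy0 y1 hy1 g0 g1
  have hy0' : y0 = 0 ∨ y0 = 1 := by simpa using hy0
  have hy1' : y1 = 0 ∨ y1 = 1 := by simpa using hy1
  -- measurable sets
  have mX : ∀ x : E, MeasurableSet {ω | X ω = x} :=
    fun x => hX (measurableSet_singleton x)
  have mY0 : ∀ a : ℕ, MeasurableSet {ω | Y0 ω = a} :=
    fun a => hY0 (measurableSet_singleton a)
  have mY1 : ∀ a : ℕ, MeasurableSet {ω | Y1 ω = a} :=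
    fun a => hY1 (measurableSet_singleton a)
  -- real-valued quantities
  set qR : E → ℝ := fun x => (P {ω | X ω = x}).toReal with hqR
  set cR : E → ℕ → ℕ → ℝ := fun x a b =>
    (P ({ω | X ω = x} ∩ {ω | Y0 ω = a} ∩ {ω | Y1 ω = b})).toReal with hcR
  have cnn : ∀ x a b, 0 ≤ cR x a b := fun _ _ _ => ENNReal.toReal_nonneg
  have qnn : ∀ x, 0 ≤ qR x := fun _ => ENNReal.toReal_nonneg
  have cle : ∀ x a b, cR x a b ≤ qR x := fun x a b =>
    ENNReal.toReal_mono (measure_ne_top P _)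
      (measure_mono (Set.inter_subset_left.trans Set.inter_subset_left))
  -- the four cells partition {X = x}
  have hsum4 : ∀ x, cR x 0 0 + cR x 0 1 + cR x 1 0 + cR x 1 1 = qR x := by
    intro x
    have h1 : ∀ a : ℕ,
        P ({ω | X ω = x} ∩ {ω | Y0 ω = a} ∩ {ω | Y1 ω = 0}) +
          P ({ω | X ω = x} ∩ {ω | Y0 ω = a} ∩ {ω | Y1 ω = 1}) =
          P ({ω | X ω = x} ∩ {ω | Y0 ω = a}) := fun a =>
      binary_split P Y1 hb1 hY1 _ ((mX x).inter (mY0 a))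
    have h2 : P ({ω | X ω = x} ∩ {ω | Y0 ω = 0}) +
        P ({ω | X ω = x} ∩ {ω | Y0 ω = 1}) = P {ω | X ω = x} :=
      binary_split P Y0 hb0 hY0 _ (mX x)
    have h3 : (P ({ω | X ω = x} ∩ {ω | Y0 ω = 0} ∩ {ω | Y1 ω = 0}) +
        P ({ω | X ω = x} ∩ {ω | Y0 ω = 0} ∩ {ω | Y1 ω = 1})) +
        (P ({ω | X ω = x} ∩ {ω | Y0 ω = 1} ∩ {ω | Y1 ω = 0}) +
        P ({ω | X ω = x} ∩ {ω | Y0 ω = 1} ∩ {ω | Y1 ω = 1})) = P {ω | X ω = x} := by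
      rw [h1 0, h1 1, h2]
    have h4 := congrArg ENNReal.toReal h3
    rw [ENNReal.toReal_add, ENNReal.toReal_add (measure_ne_top P _) (measure_ne_top P _),
        ENNReal.toReal_add (measure_ne_top P _) (measure_ne_top P _)] at h4
    · simp only [hcR, hqR]; linarith
    · exact ENNReal.add_ne_top.2 ⟨measure_ne_top P _, measure_ne_top P _⟩
    · exact ENNReal.add_ne_top.2 ⟨measure_ne_top P _, measure_ne_top P _⟩
  -- each entropy term vanishes
  have key : ∀ x a b, cR x a b * Real.log (cR x a b / qR x) ≤ 0 := fun x a b =>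
    mul_nonpos_iff.2 (Or.inl ⟨cnn x a b, Real.log_nonpos (by positivity)
      (div_le_one_of_le₀ (cle x a b) (qnn x))⟩)
  have hsum0 : ∑ x : E, ∑ a ∈ ({0, 1} : Finset ℕ), ∑ b ∈ ({0, 1} : Finset ℕ),
      cR x a b * Real.log (cR x a b / qR x) = 0 := by
    have := hH
    unfold condEntropyBin at this
    exact neg_eq_zero.mp this
  have hzero : ∀ x : E, ∀ a ∈ ({0, 1} : Finset ℕ), ∀ b ∈ ({0, 1} : Finset ℕ),
      cR x a b * Real.log (cR x a b / qR x) = 0 := by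
    intro x a ha b hb
    have o1 := (Finset.sum_eq_zero_iff_of_nonpos (fun x _ =>
      Finset.sum_nonpos (fun a _ => Finset.sum_nonpos (fun b _ => key x a b)))).1 hsum0
    have o2 := (Finset.sum_eq_zero_iff_of_nonpos (fun a _ =>
      Finset.sum_nonpos (fun b _ => key x a b))).1 (o1 x (Finset.mem_univ x))
    exact (Finset.sum_eq_zero_iff_of_nonpos (fun b _ => key x a b)).1 (o2 a ha) b hb
  -- dichotomy
  have dich : ∀ x : E, ∀ a ∈ ({0, 1} : Finset ℕ), ∀ b ∈ ({0, 1} : Finset ℕ),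
      cR x a b = 0 ∨ cR x a b = qR x := by
    intro x a ha b hb
    by_cases hc0 : cR x a b = 0
    · exact Or.inl hc0
    · right
      have hlog : Real.log (cR x a b / qR x) = 0 := by
        rcases mul_eq_zero.1 (hzero x a ha b hb) with h | h
        · exact absurd h hc0
        · exact h
      rcases Real.log_eq_zero.1 hlog with h | h | h
      · rcases div_eq_zero_iff.1 h with h' | h'
        · exact absurd h' hc0
        · exact absurd (le_antisymm (h' ▸ cle x a b) (cnn x a b)) hc0
      · have hq0 : qR x ≠ 0 := by
          rintro h0
          rw [h0, div_zero] at h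
          norm_num at h
        exact (div_eq_one_iff_eq hq0).1 h
      · exfalso
        have := div_nonneg (cnn x a b) (qnn x)
        rw [h] at this
        linarith
  -- conditional probabilities of Y_t = 1 given X = x, as sums of cells
  have hS0E : ∀ x : E, (P ({ω' | Y0 ω' = 1} ∩ {ω' | X ω' = x})).toReal =
      cR x 1 0 + cR x 1 1 := by
    intro x
    have h1 := binary_split P Y1 hb1 hY1 ({ω | X ω = x} ∩ {ω | Y0 ω = 1})
      ((mX x).inter (mY0 1))
    rw [Set.inter_comm, ← h1,
      ENNReal.toReal_add (measure_ne_top P _) (measure_ne_top P _)]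
  have hS1E : ∀ x : E, (P ({ω' | Y1 ω' = 1} ∩ {ω' | X ω' = x})).toReal =
      cR x 0 1 + cR x 1 1 := by
    intro x
    have h1 := binary_split P Y0 hb0 hY0 ({ω | X ω = x} ∩ {ω | Y1 ω = 1})
      ((mX x).inter (mY1 1))
    have e : ∀ a : ℕ, {ω | X ω = x} ∩ {ω | Y1 ω = 1} ∩ {ω | Y0 ω = a} =
        {ω | X ω = x} ∩ {ω | Y0 ω = a} ∩ {ω | Y1 ω = 1} := by
      intro a
      ext ω
      simp only [Set.mem_inter_iff, Set.mem_setOf_eq]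
      tauto
    rw [e 0, e 1] at h1
    rw [Set.inter_comm, ← h1,
      ENNReal.toReal_add (measure_ne_top P _) (measure_ne_top P _)]
  -- the per-point identity
  have main : ∀ x : E,
      qR x * max 0 ((if y0 = 1 then (cR x 1 0 + cR x 1 1) / qR x
          else 1 - (cR x 1 0 + cR x 1 1) / qR x) +
        (if y1 = 1 then (cR x 0 1 + cR x 1 1) / qR x
          else 1 - (cR x 0 1 + cR x 1 1) / qR x) - 1) = cR x y0 y1 ∧
      qR x * min (if y0 = 1 then (cR x 1 0 + cR x 1 1) / qR x
          else 1 - (cR x 1 0 + cR x 1 1) / qR x)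
        (if y1 = 1 then (cR x 0 1 + cR x 1 1) / qR x
          else 1 - (cR x 0 1 + cR x 1 1) / qR x) = cR x y0 y1 := by
    intro x
    by_cases hq : qR x = 0
    · have hc0 : cR x y0 y1 = 0 := le_antisymm (hq ▸ cle x y0 y1) (cnn x y0 y1)
      rw [hq, hc0]
      simp
    · have hqpos : 0 < qR x := lt_of_le_of_ne (qnn x) (Ne.symm hq)
      exact cell_arith (qR x) (cR x 0 0) (cR x 0 1) (cR x 1 0) (cR x 1 1)
        (cR x y0 y1) hqpos (cnn x 0 0) (cnn x 0 1) (cnn x 1 0) (cnn x 1 1)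
        (dich x 0 (by simp) 0 (by simp)) (dich x 0 (by simp) 1 (by simp))
        (dich x 1 (by simp) 0 (by simp)) (dich x 1 (by simp) 1 (by simp))
        (hsum4 x) y0 y1 hy0' hy1'
        (by rcases hy0' with h | h <;> rcases hy1' with h' | h' <;>
          subst h <;> subst h' <;> simp)
  -- the joint probability as a sum of cells
  have hjoint : (P {ω | Y0 ω = y0 ∧ Y1 ω = y1}).toReal = ∑ x : E, cR x y0 y1 := by
    have hsplit := fintype_split P X hX ({ω | Y0 ω = y0} ∩ {ω | Y1 ω = y1})
      ((mY0 y0).inter (mY1 y1))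
    have e : ∀ x : E, {ω | Y0 ω = y0} ∩ {ω | Y1 ω = y1} ∩ {ω | X ω = x} =
        {ω | X ω = x} ∩ {ω | Y0 ω = y0} ∩ {ω | Y1 ω = y1} := by
      intro x
      ext ω
      simp only [Set.mem_inter_iff, Set.mem_setOf_eq]
      tauto
    have e2 : {ω | Y0 ω = y0 ∧ Y1 ω = y1} =
        {ω | Y0 ω = y0} ∩ {ω | Y1 ω = y1} := rfl
    rw [e2, ← hsplit, ENNReal.toReal_sum (fun x _ => measure_ne_top P _)]
    exact Finset.sum_congr rfl fun x _ => by rw [e x]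
  constructor
  · calc (∫ ω, max 0 (g0 ω + g1 ω - 1) ∂P)
        = ∑ x : E, (P {ω | X ω = x}).toReal *
            max 0 ((if y0 = 1
                then (P ({ω' | Y0 ω' = 1} ∩ {ω' | X ω' = x})).toReal / qR x
                else 1 - (P ({ω' | Y0 ω' = 1} ∩ {ω' | X ω' = x})).toReal / qR x) +
              (if y1 = 1
                then (P ({ω' | Y1 ω' = 1} ∩ {ω' | X ω' = x})).toReal / qR x
                else 1 - (P ({ω' | Y1 ω' = 1} ∩ {ω' | X ω' = x})).toReal / qR x)
              - 1) := integral_comp_fin P X hX (fun x =>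
                max 0 ((if y0 = 1
                    then (P ({ω' | Y0 ω' = 1} ∩ {ω' | X ω' = x})).toReal / qR x
                    else 1 - (P ({ω' | Y0 ω' = 1} ∩ {ω' | X ω' = x})).toReal / qR x) +
                  (if y1 = 1
                    then (P ({ω' | Y1 ω' = 1} ∩ {ω' | X ω' = x})).toReal / qR x
                    else 1 - (P ({ω' | Y1 ω' = 1} ∩ {ω' | X ω' = x})).toReal / qR x)
                  - 1))
      _ = ∑ x : E, cR x y0 y1 := by
          refine Finset.sum_congr rfl fun x _ => ?_
          rw [hS0E x, hS1E x]
          exact (main x).1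
      _ = (P {ω | Y0 ω = y0 ∧ Y1 ω = y1}).toReal := hjoint.symm
  · calc (P {ω | Y0 ω = y0 ∧ Y1 ω = y1}).toReal
        = ∑ x : E, cR x y0 y1 := hjoint
      _ = ∑ x : E, (P {ω | X ω = x}).toReal *
            min (if y0 = 1
                then (P ({ω' | Y0 ω' = 1} ∩ {ω' | X ω' = x})).toReal / qR x
                else 1 - (P ({ω' | Y0 ω' = 1} ∩ {ω' | X ω' = x})).toReal / qR x)
              (if y1 = 1
                then (P ({ω' | Y1 ω' = 1} ∩ {ω' | X ω' = x})).toReal / qR x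
                else 1 - (P ({ω' | Y1 ω' = 1} ∩ {ω' | X ω' = x})).toReal / qR x) := by
          refine (Finset.sum_congr rfl fun x _ => ?_).symm
          rw [hS0E x, hS1E x]
          exact (main x).2
      _ = ∫ ω, min (g0 ω) (g1 ω) ∂P := (integral_comp_fin P X hX (fun x =>
            min (if y0 = 1
                then (P ({ω' | Y0 ω' = 1} ∩ {ω' | X ω' = x})).toReal / qR x
                else 1 - (P ({ω' | Y0 ω' = 1} ∩ {ω' | X ω' = x})).toReal / qR x)
              (if y1 = 1
                then (P ({ω' | Y1 ω' = 1} ∩ {ω' | X ω' = x})).toReal / qR x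
                else 1 - (P ({ω' | Y1 ω' = 1} ∩ {ω' | X ω' = x})).toReal / qR x))).symm
end
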